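/- arXiv:1404.0074 — 7 statements merged into one kernel-verified Lean document; each statement's English description precedes it below -/
import Mathlib

section
/- Let τ : U ⊕ K → U ⊕ L be an isometry between finite-dimensional complex inner product spaces, with block decomposition τ = [[A, B], [C, D]] where A : U → U, B : K → U (i.e. block column spaces U, K and block row spaces U, L). Then the operator D + C ∘ (I - A)⁺ ∘ B : K → L is an isometry, where (·)⁺ denotes the Moore-Penrose pseudoinverse. -/
/-!
Write `M = 1 - A`. Isometry of the first block column gives `MᴴM + CᴴC = M + Mᴴ`, so for
`MᴴQ = 0` the positive form `Qᴴ(MᴴM + CᴴC)Q` vanishes and `MQ = CQ = 0`; the block relation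
`BᴴA + DᴴC = 0` then gives `BᴴQ = 0`. Hence `range B ⊆ range M`, so `X = M⁺B` solves `MX = B`,
and for any solution of `(1 - A)X = B` expanding `(D + CX)ᴴ(D + CX)` with the block relations
gives `1`.
-/

open Matrix

/-- The Moore-Penrose pseudoinverse conditions. -/
def IsMP {m n : Type*} [Fintype m] [Fintype n]
    (M : Matrix m n ℂ) (P : Matrix n m ℂ) : Prop :=
  M * P * M = M ∧ P * M * P = P ∧ (M * P).IsHermitian ∧ (P * M).IsHermitian

namespace Matrix

section Blocks

variable {R : Type*} [Ring R] [StarRing R] {n m l : Type*}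
  [Fintype n] [Fintype l] [DecidableEq n] [DecidableEq m]
  {A : Matrix n n R} {B : Matrix n m R} {C : Matrix l n R} {D : Matrix l m R}

theorem fromBlocks_conjTranspose_mul_self_eq_one_iff :
    (fromBlocks A B C D)ᴴ * fromBlocks A B C D = 1 ↔
      Aᴴ * A + Cᴴ * C = 1 ∧ Aᴴ * B + Cᴴ * D = 0 ∧ Bᴴ * A + Dᴴ * C = 0 ∧
        Bᴴ * B + Dᴴ * D = 1 := by
  rw [fromBlocks_conjTranspose, fromBlocks_multiply, ← fromBlocks_one, fromBlocks_inj]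

theorem conjTranspose_one_sub_mul_one_sub_add_eq (h₁₁ : Aᴴ * A + Cᴴ * C = 1) :
    (1 - A)ᴴ * (1 - A) + Cᴴ * C = (1 - A) + (1 - A)ᴴ := by
  rw [← sub_eq_iff_eq_add'.mpr h₁₁.symm, conjTranspose_sub, conjTranspose_one]
  noncomm_ring

theorem feedback_conjTranspose_mul_self_eq_one {X : Matrix n m R}
    (h₁₁ : Aᴴ * A + Cᴴ * C = 1) (h₁₂ : Aᴴ * B + Cᴴ * D = 0) (h₂₁ : Bᴴ * A + Dᴴ * C = 0)
    (h₂₂ : Bᴴ * B + Dᴴ * D = 1) (hX : (1 - A) * X = B) :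
    (D + C * X)ᴴ * (D + C * X) = 1 := by
  calc (D + C * X)ᴴ * (D + C * X)
      = Dᴴ * D + (Dᴴ * C) * X + Xᴴ * (Cᴴ * D) + Xᴴ * (Cᴴ * C) * X := by
        simp only [conjTranspose_add, conjTranspose_mul, Matrix.add_mul, Matrix.mul_add,
          Matrix.mul_assoc]
        abel
    _ = (1 - Bᴴ * B) + (-(Bᴴ * A)) * X + Xᴴ * (-(Aᴴ * B)) + Xᴴ * (1 - Aᴴ * A) * X := by
        rw [eq_sub_of_add_eq' h₂₂, eq_neg_of_add_eq_zero_right h₂₁,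
          eq_neg_of_add_eq_zero_right h₁₂, eq_sub_of_add_eq' h₁₁]
    _ = 1 - Bᴴ * B - Bᴴ * (A * X) - (A * X)ᴴ * B + (Xᴴ * X - (A * X)ᴴ * (A * X)) := by
        simp only [Matrix.neg_mul, Matrix.mul_neg, Matrix.sub_mul, Matrix.mul_sub,
          conjTranspose_mul, Matrix.mul_assoc, Matrix.mul_one]
        abel
    _ = 1 := by
        rw [show A * X = X - B by rw [← hX, Matrix.sub_mul, Matrix.one_mul, sub_sub_cancel]]
        simp only [conjTranspose_sub, Matrix.sub_mul, Matrix.mul_sub]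
        abel

end Blocks

section Kernel

variable {R : Type*} [Ring R] [PartialOrder R] [StarRing R] [StarOrderedRing R]
  [NoZeroDivisors R] {n m l k : Type*} [Fintype n] [Fintype l]

theorem eq_zero_of_conjTranspose_mul_self_add_eq_zero {X : Matrix n m R} {Y : Matrix l m R}
    (h : Xᴴ * X + Yᴴ * Y = 0) : X = 0 := by
  have hXY : (fromRows X Y)ᴴ * fromRows X Y = 0 := by
    rw [conjTranspose_fromRows_eq_fromCols_conjTranspose, fromCols_mul_fromRows, h]
  have hX := congrArg toRows₁ (conjTranspose_mul_self_eq_zero.mp hXY)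
  rwa [toRows₁_fromRows] at hX

theorem mul_eq_zero_of_conjTranspose_mul_eq_zero {M : Matrix n n R} {C : Matrix l n R}
    {Q : Matrix n k R} (hMC : Mᴴ * M + Cᴴ * C = M + Mᴴ) (hQ : Mᴴ * Q = 0) :
    M * Q = 0 ∧ C * Q = 0 := by
  have hGram : (M * Q)ᴴ * (M * Q) + (C * Q)ᴴ * (C * Q) = 0 := by
    calc (M * Q)ᴴ * (M * Q) + (C * Q)ᴴ * (C * Q) = Qᴴ * ((Mᴴ * M + Cᴴ * C) * Q) := by
          simp only [conjTranspose_mul, Matrix.add_mul, Matrix.mul_add, Matrix.mul_assoc]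
      _ = (Mᴴ * Q)ᴴ * Q + Qᴴ * (Mᴴ * Q) := by
          simp only [hMC, conjTranspose_mul, conjTranspose_conjTranspose, Matrix.add_mul,
            Matrix.mul_add, Matrix.mul_assoc]
      _ = 0 := by rw [hQ]; simp
  exact ⟨eq_zero_of_conjTranspose_mul_self_add_eq_zero hGram,
    eq_zero_of_conjTranspose_mul_self_add_eq_zero ((add_comm _ _).trans hGram)⟩

theorem conjTranspose_mul_eq_zero_of_conjTranspose_one_sub_mul_eq_zero [DecidableEq n]
    {A : Matrix n n R} {B : Matrix n m R} {C : Matrix l n R} {D : Matrix l m R}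
    {Q : Matrix n k R} (h₁₁ : Aᴴ * A + Cᴴ * C = 1) (h₂₁ : Bᴴ * A + Dᴴ * C = 0)
    (hQ : (1 - A)ᴴ * Q = 0) : Bᴴ * Q = 0 := by
  obtain ⟨hMQ, hCQ⟩ :=
    mul_eq_zero_of_conjTranspose_mul_eq_zero (conjTranspose_one_sub_mul_one_sub_add_eq h₁₁) hQ
  have hAQ : A * Q = Q := by
    rw [Matrix.sub_mul, Matrix.one_mul, sub_eq_zero] at hMQ
    exact hMQ.symm
  calc Bᴴ * Q = (Bᴴ * A + Dᴴ * C) * Q := by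
        rw [Matrix.add_mul, Matrix.mul_assoc, hAQ, Matrix.mul_assoc, hCQ, Matrix.mul_zero,
          add_zero]
    _ = 0 := by rw [h₂₁, Matrix.zero_mul]

end Kernel

end Matrix

namespace IsMP

variable {m n k : Type*} [Fintype m] [Fintype n] [DecidableEq m]
  {M : Matrix m n ℂ} {P : Matrix n m ℂ}

theorem conjTranspose_mul_one_sub_mul_eq_zero (hP : IsMP M P) : Mᴴ * (1 - M * P) = 0 := by
  rw [Matrix.mul_sub, Matrix.mul_one, ← hP.2.2.1.eq, ← conjTranspose_mul, hP.1, sub_self]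

theorem mul_mul_eq_of_conjTranspose_mul_one_sub_mul_eq_zero (hP : IsMP M P)
    {B : Matrix m k ℂ} (hB : Bᴴ * (1 - M * P) = 0) : M * P * B = B := by
  rw [Matrix.mul_sub, Matrix.mul_one, sub_eq_zero] at hB
  rw [← hP.2.2.1.eq, ← conjTranspose_conjTranspose B, ← conjTranspose_mul, ← hB]

end IsMP

open ComplexOrder in
/-- If τ = [[A,B],[C,D]] : U ⊕ K → U ⊕ L is an isometry, then
D + C ∘ (I - A)⁺ ∘ B is an isometry K → L. -/
theorem stmt0 {u k l : ℕ}
    (A : Matrix (Fin u) (Fin u) ℂ) (B : Matrix (Fin u) (Fin k) ℂ)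
    (C : Matrix (Fin l) (Fin u) ℂ) (D : Matrix (Fin l) (Fin k) ℂ)
    (hiso : (fromBlocks A B C D)ᴴ * fromBlocks A B C D = 1)
    (P : Matrix (Fin u) (Fin u) ℂ) (hP : IsMP (1 - A) P) :
    (D + C * P * B)ᴴ * (D + C * P * B) = 1 := by
  obtain ⟨h₁₁, h₁₂, h₂₁, h₂₂⟩ := fromBlocks_conjTranspose_mul_self_eq_one_iff.mp hiso
  have hB : Bᴴ * (1 - (1 - A) * P) = 0 :=
    conjTranspose_mul_eq_zero_of_conjTranspose_one_sub_mul_eq_zero h₁₁ h₂₁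
      hP.conjTranspose_mul_one_sub_mul_eq_zero
  have hX : (1 - A) * (P * B) = B := by
    rw [← Matrix.mul_assoc]
    exact hP.mul_mul_eq_of_conjTranspose_mul_one_sub_mul_eq_zero hB
  rw [Matrix.mul_assoc C]
  exact feedback_conjTranspose_mul_self_eq_one h₁₁ h₁₂ h₂₁ h₂₂ hX
end

section
/- Let τ : U ⊕ K → U ⊕ L be an isometry with blocks [[A,B],[C,D]]. Then (I - A) is range-Hermitian, i.e., the range of (I - A) equals the range of (I - A)†. -/
/-!
The `(1,1)` block of `τᴴ τ = 1` reads `AᴴA + CᴴC = 1`, so `A` is a contraction, and then so is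
`Aᴴ`. For a contraction `T`, `T x = x` gives `re ⟪T† x, x⟫ = ‖x‖²` with `‖T† x‖ ≤ ‖x‖`, which
forces `T† x = x` (and symmetrically with `T` and `T†` swapped). Hence
`ker (1 - A) = ker (1 - A)ᴴ`, and taking orthogonal complements turns this into
`range (1 - A)ᴴ = range (1 - A)`.
-/

open Matrix

section Contraction

variable {𝕜 E F : Type*} [RCLike 𝕜]
  [NormedAddCommGroup E] [InnerProductSpace 𝕜 E]

theorem eq_of_norm_le_of_re_inner_eq {x y : E} (hy : ‖y‖ ≤ ‖x‖)
    (hyx : RCLike.re (inner 𝕜 y x) = ‖x‖ ^ 2) : y = x := by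
  have h : ‖y - x‖ ^ 2 ≤ 0 := by
    rw [@norm_sub_sq 𝕜, hyx]
    nlinarith [norm_nonneg x, norm_nonneg y]
  rw [← sub_eq_zero, ← norm_eq_zero]
  nlinarith [norm_nonneg (y - x)]

variable [FiniteDimensional 𝕜 E] [NormedAddCommGroup F] [InnerProductSpace 𝕜 F]
  [FiniteDimensional 𝕜 F]

namespace LinearMap

theorem norm_apply_le_of_adjoint_comp_self_add {G : Type*} [NormedAddCommGroup G]
    [InnerProductSpace 𝕜 G] [FiniteDimensional 𝕜 G] {T : E →ₗ[𝕜] F} {S : E →ₗ[𝕜] G}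
    (h : T.adjoint ∘ₗ T + S.adjoint ∘ₗ S = id) (x : E) : ‖T x‖ ≤ ‖x‖ := by
  have hnorm : ‖T x‖ ^ 2 + ‖S x‖ ^ 2 = ‖x‖ ^ 2 := by
    have := congrArg (fun f : E →ₗ[𝕜] E => RCLike.re (inner 𝕜 x (f x))) h
    simpa only [add_apply, comp_apply, id_apply, inner_add_right, adjoint_inner_right,
      map_add, inner_self_eq_norm_sq] using this
  nlinarith [norm_nonneg (T x), norm_nonneg x, sq_nonneg ‖S x‖]

theorem norm_adjoint_apply_le {T : E →ₗ[𝕜] F} (hT : ∀ x, ‖T x‖ ≤ ‖x‖) (y : F) :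
    ‖T.adjoint y‖ ≤ ‖y‖ := by
  have h : ‖T.adjoint y‖ ^ 2 ≤ ‖T.adjoint y‖ * ‖y‖ :=
    calc ‖T.adjoint y‖ ^ 2 = RCLike.re (inner 𝕜 (T (T.adjoint y)) y) := by
          rw [← adjoint_inner_right, inner_self_eq_norm_sq]
      _ ≤ ‖T (T.adjoint y)‖ * ‖y‖ := re_inner_le_norm _ _
      _ ≤ ‖T.adjoint y‖ * ‖y‖ := by gcongr; exact hT _
  nlinarith [norm_nonneg (T.adjoint y), norm_nonneg y]

theorem adjoint_apply_eq_self_of_apply_eq_self {T : E →ₗ[𝕜] E}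
    (hT : ∀ y, ‖T.adjoint y‖ ≤ ‖y‖) {x : E} (hx : T x = x) : T.adjoint x = x :=
  eq_of_norm_le_of_re_inner_eq (hT x) (by rw [adjoint_inner_left, hx, inner_self_eq_norm_sq])

theorem apply_eq_self_iff_adjoint_apply_eq_self {T : E →ₗ[𝕜] E} (hT : ∀ x, ‖T x‖ ≤ ‖x‖)
    {x : E} : T x = x ↔ T.adjoint x = x := by
  refine ⟨adjoint_apply_eq_self_of_apply_eq_self (norm_adjoint_apply_le hT), fun hx => ?_⟩
  simpa only [adjoint_adjoint] using
    adjoint_apply_eq_self_of_apply_eq_self (T := T.adjoint) (by simpa only [adjoint_adjoint]) hx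

theorem ker_adjoint_one_sub {T : E →ₗ[𝕜] E} (hT : ∀ x, ‖T x‖ ≤ ‖x‖) :
    ker (1 - T).adjoint = ker (1 - T) := by
  ext x
  simp [← star_eq_adjoint, sub_eq_zero, eq_comm (a := x),
    apply_eq_self_iff_adjoint_apply_eq_self hT]

theorem range_eq_range_adjoint_of_ker_adjoint_eq {S : E →ₗ[𝕜] E}
    (h : ker S.adjoint = ker S) : range S = range S.adjoint := by
  rw [← orthogonal_ker, ← h, orthogonal_ker, adjoint_adjoint]

end LinearMap

end Contraction

theorem Matrix.range_mulVecLin_eq_map_range_toEuclideanLin {𝕜 m n : Type*} [RCLike 𝕜]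
    [Fintype n] [DecidableEq n] (M : Matrix m n 𝕜) :
    LinearMap.range M.mulVecLin =
      (LinearMap.range M.toEuclideanLin).map (WithLp.linearEquiv 2 𝕜 (m → 𝕜)).toLinearMap := by
  rw [← LinearMap.range_comp]
  ext y
  simp [LinearMap.mem_range, (WithLp.equiv 2 (n → 𝕜)).symm.exists_congr_left]

/-- If τ = [[A,B],[C,D]] is an isometry, then I - A is range-Hermitian. -/
theorem stmt2 {u k l : ℕ}
    (A : Matrix (Fin u) (Fin u) ℂ) (B : Matrix (Fin u) (Fin k) ℂ)
    (C : Matrix (Fin l) (Fin u) ℂ) (D : Matrix (Fin l) (Fin k) ℂ)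
    (hiso : (fromBlocks A B C D)ᴴ * fromBlocks A B C D = 1) :
    LinearMap.range (1 - A).mulVecLin = LinearMap.range ((1 - A)ᴴ).mulVecLin := by
  have hblock : Aᴴ * A + Cᴴ * C = 1 := by
    simpa [fromBlocks_conjTranspose, fromBlocks_multiply, ← fromBlocks_one] using
      congrArg toBlocks₁₁ hiso
  have hA : ∀ x, ‖toEuclideanLin A x‖ ≤ ‖x‖ :=
    LinearMap.norm_apply_le_of_adjoint_comp_self_add (S := toEuclideanLin C) <| by
      simpa [← toEuclideanLin_conjTranspose_eq_adjoint] using congrArg toEuclideanLin hblock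
  have hsub : toEuclideanLin (1 - A) = 1 - toEuclideanLin A := by
    rw [map_sub, toLpLin_one, Module.End.one_eq_id]
  rw [range_mulVecLin_eq_map_range_toEuclideanLin, range_mulVecLin_eq_map_range_toEuclideanLin,
    toEuclideanLin_conjTranspose_eq_adjoint, hsub,
    LinearMap.range_eq_range_adjoint_of_ker_adjoint_eq (LinearMap.ker_adjoint_one_sub hA)]
end

section
/- Let A, B, C, D and A', B', C', D' be complex matrices (of compatible sizes) satisfying A A' + B B' = I, A C' + B D' = 0, C A' + D B' = 0, C C' + D D' = I, and suppose (I - A) and (I - A') are invertible. Then (D + C (I - A)⁻¹ B)(D' + B' (I - A')⁻¹ C') = I. -/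
open Matrix

/-- The key matrix identity of Theorem 4.1. -/
theorem stmt4 {u k l : ℕ}
    (A A' : Matrix (Fin u) (Fin u) ℂ)
    (B : Matrix (Fin u) (Fin k) ℂ) (B' : Matrix (Fin k) (Fin u) ℂ)
    (C : Matrix (Fin l) (Fin u) ℂ) (C' : Matrix (Fin u) (Fin l) ℂ)
    (D : Matrix (Fin l) (Fin k) ℂ) (D' : Matrix (Fin k) (Fin l) ℂ)
    (h1 : A * A' + B * B' = 1) (h2 : A * C' + B * D' = 0)
    (h3 : C * A' + D * B' = 0) (h4 : C * C' + D * D' = 1)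
    (hA : IsUnit (1 - A)) (hA' : IsUnit (1 - A')) :
    (D + C * (1 - A)⁻¹ * B) * (D' + B' * (1 - A')⁻¹ * C') = 1 := by
  have hdA : IsUnit (1 - A).det := (isUnit_iff_isUnit_det _).mp hA
  have hdA' : IsUnit (1 - A').det := (isUnit_iff_isUnit_det _).mp hA'
  set P := (1 - A)⁻¹ with hP
  set Q := (1 - A')⁻¹ with hQ
  have hP2 : P * (1 - A) = 1 := nonsing_inv_mul _ hdA
  have hQ1 : (1 - A') * Q = 1 := mul_nonsing_inv _ hdA'
  have hBB' : B * B' = 1 - A * A' := eq_sub_of_add_eq' h1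
  have hBD' : B * D' = -(A * C') := by
    have h := h2; rw [add_eq_zero_iff_eq_neg'] at h; exact h
  have hDB' : D * B' = -(C * A') := by
    have h := h3; rw [add_eq_zero_iff_eq_neg'] at h; exact h
  have hDD' : D * D' = 1 - C * C' := eq_sub_of_add_eq' h4
  have key : P * ((1 - A * A') * (Q * C')) = C' + A' * (Q * C') + P * (A * C') := by
    have e : (1 : Matrix (Fin u) (Fin u) ℂ) - A * A'
        = (1 - A) * (1 - A') + (1 - A) * A' + A * (1 - A') := by noncomm_ring
    rw [e]
    simp only [Matrix.add_mul, Matrix.mul_add, ← Matrix.mul_assoc, hP2, hQ1]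
    simp only [Matrix.mul_assoc, hQ1]
    simp only [Matrix.one_mul, Matrix.mul_one]
  have hDB2 : D * (B' * (Q * C')) = -(C * (A' * (Q * C'))) := by
    rw [← Matrix.mul_assoc, hDB', Matrix.neg_mul, Matrix.mul_assoc]
  have hBB2 : B * (B' * (Q * C')) = (1 - A * A') * (Q * C') := by
    rw [← Matrix.mul_assoc, hBB']
  rw [Matrix.add_mul, Matrix.mul_add, Matrix.mul_add]
  simp only [Matrix.mul_assoc]
  rw [hDD', hDB2, hBD', hBB2, key]
  simp only [Matrix.mul_add, Matrix.mul_neg]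
  abel
end

section
/- Let M : U ⊕ V → U ⊕ V with blocks [[P, Q], [R, S]] such that I - P is invertible and I - (S + R (I - P)⁻¹ Q) is invertible. Then I - M is invertible, and moreover (I - M)⁻¹ restricted and computed via the Banachiewicz block-inverse formula yields: for any extension τ = [[M, B], [C, D]] : U ⊕ V ⊕ K → U ⊕ V ⊕ L, we have D + [C₁ C₂] (I - M)⁻¹ [B₁; B₂] = D' + C'(I - P')⁻¹ B', where [[P', B'], [C', D']] are the blocks of the operator obtained by first eliminating U: P' = S + R(I - P)⁻¹Q, B' = B₂ + R(I - P)⁻¹B₁, C' = C₂ + C₁(I - P)⁻¹Q, D' = D + C₁(I - P)⁻¹B₁. -/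
/-!
Write `1 - M = [[1 - P, -Q], [-R, 1 - S]]`. Its Schur complement with respect to the corner
`1 - P` is `1 - P'`, so both invertibility and the identity follow from the Banachiewicz
block-inverse formula: multiplying it out between `[C₁ C₂]` and `[B₁; B₂]` and regrouping gives
`C₁ (1 - P)⁻¹ B₁ + C' (1 - P')⁻¹ B'`.
-/

open Matrix

namespace Matrix

variable {l m n p α : Type*} [DecidableEq m] [DecidableEq n] [CommRing α]

theorem one_sub_fromBlocks (P : Matrix m m α) (Q : Matrix m n α) (R : Matrix n m α)
    (S : Matrix n n α) : 1 - fromBlocks P Q R S = fromBlocks (1 - P) (-Q) (-R) (1 - S) := by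
  rw [← fromBlocks_one, sub_eq_add_neg, fromBlocks_neg, fromBlocks_add, zero_add, zero_add,
    ← sub_eq_add_neg, ← sub_eq_add_neg]

variable [Fintype m] [Fintype n]

theorem isUnit_fromBlocks_of_isUnit_schur₁₁ {A : Matrix m m α} {B : Matrix m n α}
    {C : Matrix n m α} {D : Matrix n n α} (hA : IsUnit A) (hS : IsUnit (D - C * A⁻¹ * B)) :
    IsUnit (fromBlocks A B C D) := by
  have := hA.invertible
  rwa [isUnit_fromBlocks_iff_of_invertible₁₁, invOf_eq_nonsing_inv]

theorem fromCols_mul_inv_fromBlocks_mul_fromRows {A : Matrix m m α} {B : Matrix m n α}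
    {C : Matrix n m α} {D : Matrix n n α} (C₁ : Matrix l m α) (C₂ : Matrix l n α)
    (B₁ : Matrix m p α) (B₂ : Matrix n p α) (hA : IsUnit A) (hS : IsUnit (D - C * A⁻¹ * B)) :
    fromCols C₁ C₂ * (fromBlocks A B C D)⁻¹ * fromRows B₁ B₂ =
      C₁ * A⁻¹ * B₁ + (C₂ - C₁ * A⁻¹ * B) * (D - C * A⁻¹ * B)⁻¹ * (B₂ - C * A⁻¹ * B₁) := by
  have := hA.invertible
  have : Invertible (D - C * ⅟A * B) := by rw [invOf_eq_nonsing_inv]; exact hS.invertible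
  have := fromBlocks₁₁Invertible A B C D
  rw [← invOf_eq_nonsing_inv (fromBlocks A B C D), invOf_fromBlocks₁₁_eq,
    fromCols_mul_fromBlocks, fromCols_mul_fromRows]
  simp only [invOf_eq_nonsing_inv, Matrix.add_mul, Matrix.mul_add, Matrix.sub_mul,
    Matrix.mul_sub, Matrix.mul_neg, Matrix.neg_mul, Matrix.mul_assoc]
  abel

end Matrix

/-- Successive feedback (vanishing) identity via the Banachiewicz formula. -/
theorem stmt7 {u v k l : ℕ}
    (P : Matrix (Fin u) (Fin u) ℂ) (Q : Matrix (Fin u) (Fin v) ℂ)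
    (R : Matrix (Fin v) (Fin u) ℂ) (S : Matrix (Fin v) (Fin v) ℂ)
    (B₁ : Matrix (Fin u) (Fin k) ℂ) (B₂ : Matrix (Fin v) (Fin k) ℂ)
    (C₁ : Matrix (Fin l) (Fin u) ℂ) (C₂ : Matrix (Fin l) (Fin v) ℂ)
    (D : Matrix (Fin l) (Fin k) ℂ)
    (hP : IsUnit (1 - P)) (hS : IsUnit (1 - (S + R * (1 - P)⁻¹ * Q))) :
    IsUnit (1 - fromBlocks P Q R S) ∧
    D + fromCols C₁ C₂ * (1 - fromBlocks P Q R S)⁻¹ * fromRows B₁ B₂ =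
      (D + C₁ * (1 - P)⁻¹ * B₁) +
        (C₂ + C₁ * (1 - P)⁻¹ * Q) * (1 - (S + R * (1 - P)⁻¹ * Q))⁻¹ *
          (B₂ + R * (1 - P)⁻¹ * B₁) := by
  have hschur : 1 - S - -R * (1 - P)⁻¹ * -Q = 1 - (S + R * (1 - P)⁻¹ * Q) := by
    simp only [Matrix.neg_mul, Matrix.mul_neg, neg_neg, sub_sub]
  rw [← hschur] at hS
  rw [one_sub_fromBlocks, fromCols_mul_inv_fromBlocks_mul_fromRows _ _ _ _ hP hS, hschur]
  refine ⟨isUnit_fromBlocks_of_isUnit_schur₁₁ hP hS, ?_⟩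
  simp only [Matrix.neg_mul, Matrix.mul_neg, sub_neg_eq_add, add_assoc]
end

section
/- Let τ : ℂ ⊕ K → ℂ ⊕ L be an isometry with blocks [[a, B], [C, D]] where a ∈ ℂ, B : K → ℂ, C : ℂ → L, D : K → L. If a ≠ 1, then D + (1 - a)⁻¹ C B is an isometry K → L; if a = 1, then B = 0, C = 0, and D is an isometry. -/
open Matrix

open scoped ComplexOrder in
lemma aux_ctms {m n : Type*} [Fintype m] {A : Matrix m n ℂ} (h : Aᴴ * A = 0) : A = 0 :=
  Matrix.conjTranspose_mul_self_eq_zero.mp h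

/-- The one-dimensional-feedback case of the Schur-complement trace on isometries. -/
theorem stmt10 {k l : ℕ} (a : ℂ)
    (B : Matrix (Fin 1) (Fin k) ℂ) (C : Matrix (Fin l) (Fin 1) ℂ)
    (D : Matrix (Fin l) (Fin k) ℂ)
    (hiso : (fromBlocks (a • (1 : Matrix (Fin 1) (Fin 1) ℂ)) B C D)ᴴ *
      fromBlocks (a • (1 : Matrix (Fin 1) (Fin 1) ℂ)) B C D = 1) :
    (a ≠ 1 → (D + (1 - a)⁻¹ • (C * B))ᴴ * (D + (1 - a)⁻¹ • (C * B)) = 1) ∧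
    (a = 1 → B = 0 ∧ C = 0 ∧ Dᴴ * D = 1) := by
  rw [fromBlocks_conjTranspose, fromBlocks_multiply, ← fromBlocks_one, fromBlocks_inj] at hiso
  obtain ⟨h11, h12, h21, h22⟩ := hiso
  simp only [conjTranspose_smul, conjTranspose_one, Matrix.smul_mul, Matrix.mul_smul,
    Matrix.one_mul, Matrix.mul_one, smul_smul, RCLike.star_def] at h11 h12 h21
  have hCC : Cᴴ * C = (1 - (starRingEnd ℂ) a * a) • (1 : Matrix (Fin 1) (Fin 1) ℂ) := by
    rw [mul_comm ((starRingEnd ℂ) a)]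
    linear_combination (norm := module) h11
  have hCD : Cᴴ * D = -((starRingEnd ℂ) a • B) := by
    linear_combination (norm := module) h12
  have hDC : Dᴴ * C = -(a • Bᴴ) := by
    linear_combination (norm := module) h21
  have hDD : Dᴴ * D = 1 - Bᴴ * B := by
    linear_combination (norm := module) h22
  have hDCB : Dᴴ * (C * B) = -(a • (Bᴴ * B)) := by
    rw [← Matrix.mul_assoc, hDC, Matrix.neg_mul, Matrix.smul_mul]
  have hBCD : Bᴴ * (Cᴴ * D) = -((starRingEnd ℂ) a • (Bᴴ * B)) := by
    rw [hCD, Matrix.mul_neg, Matrix.mul_smul]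
  have hBCCB : Bᴴ * (Cᴴ * (C * B)) = (1 - (starRingEnd ℂ) a * a) • (Bᴴ * B) := by
    rw [← Matrix.mul_assoc Cᴴ, hCC, Matrix.smul_mul, Matrix.mul_smul, Matrix.one_mul]
  constructor
  · intro ha
    have ha1 : (1 : ℂ) - a ≠ 0 := sub_ne_zero.mpr (Ne.symm ha)
    have ha2 : (1 : ℂ) - (starRingEnd ℂ) a ≠ 0 := by
      intro h
      exact ha1 (by simpa using congrArg (starRingEnd ℂ) h)
    have hconj : (starRingEnd ℂ) (1 - a) = 1 - (starRingEnd ℂ) a := by simp [map_sub]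
    rw [conjTranspose_add, conjTranspose_smul, conjTranspose_mul, Matrix.add_mul,
      Matrix.mul_add, Matrix.mul_add, Matrix.mul_smul, Matrix.smul_mul, Matrix.smul_mul,
      Matrix.mul_smul, Matrix.mul_assoc Bᴴ, Matrix.mul_assoc Bᴴ, smul_smul,
      hDCB, hBCD, hBCCB, hDD, RCLike.star_def, map_inv₀, hconj]
    have hc : (1-a)⁻¹ * -a + (1 - (starRingEnd ℂ) a)⁻¹ * -((starRingEnd ℂ) a)
        + (1 - (starRingEnd ℂ) a)⁻¹ * (1-a)⁻¹ * (1 - (starRingEnd ℂ) a * a) = 1 := by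
      field_simp
      ring
    have hM := congrArg (fun t : ℂ => t • (Bᴴ * B)) hc
    simp only [one_smul] at hM
    linear_combination (norm := module) hM
  · intro ha
    subst ha
    have hC : C = 0 := by
      apply aux_ctms
      rw [hCC]
      simp
    have hB : B = 0 := by
      have h := hCD
      rw [hC] at h
      simpa using h.symm
    refine ⟨hB, hC, ?_⟩
    rw [hDD, hB]
    simp
end

section
/- Let τ : U ⊕ K → U ⊕ L be an isometry with blocks [[A,B],[C,D]] and σ : V → U a unitary. Then the sliding identity holds for the Schur-complement trace: D + (C σ)(I - σ⁻¹ A σ)⁺ (σ⁻¹ B) = D + C (I - A)⁺ B. -/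
open Matrix

lemma isMP_unique {m n : Type*} [Fintype m] [Fintype n]
    (M : Matrix m n ℂ) (P Q : Matrix n m ℂ) (hP : IsMP M P) (hQ : IsMP M Q) :
    P = Q := by
  obtain ⟨hP1, hP2, hP3, hP4⟩ := hP
  obtain ⟨hQ1, hQ2, hQ3, hQ4⟩ := hQ
  have hMP : M * P = M * Q := by
    calc M * P = (M * Q * M) * P := by rw [hQ1]
    _ = (M * Q)ᴴ * (M * P)ᴴ := by rw [hQ3.eq, hP3.eq]; simp only [Matrix.mul_assoc]
    _ = Qᴴ * (M * P * M)ᴴ := by simp [conjTranspose_mul, Matrix.mul_assoc]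
    _ = Qᴴ * Mᴴ := by rw [hP1]
    _ = (M * Q)ᴴ := by rw [conjTranspose_mul]
    _ = M * Q := hQ3.eq
  have hPM : P * M = Q * M := by
    calc P * M = P * (M * Q * M) := by rw [hQ1]
    _ = (P * M)ᴴ * (Q * M)ᴴ := by rw [hQ4.eq, hP4.eq]; simp only [Matrix.mul_assoc]
    _ = (M * P * M)ᴴ * Qᴴ := by simp [conjTranspose_mul, Matrix.mul_assoc]
    _ = Mᴴ * Qᴴ := by rw [hP1]
    _ = (Q * M)ᴴ := by rw [conjTranspose_mul]
    _ = Q * M := hQ4.eq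
  calc P = P * M * P := hP2.symm
  _ = P * M * Q := by rw [Matrix.mul_assoc, hMP, ← Matrix.mul_assoc]
  _ = Q * M * Q := by rw [hPM]
  _ = Q := hQ2

/-- Sliding (dinaturality) of the Schur-complement trace under unitaries. -/
theorem stmt12 {u v k l : ℕ}
    (A : Matrix (Fin u) (Fin u) ℂ) (B : Matrix (Fin u) (Fin k) ℂ)
    (C : Matrix (Fin l) (Fin u) ℂ) (D : Matrix (Fin l) (Fin k) ℂ)
    (hiso : (fromBlocks A B C D)ᴴ * fromBlocks A B C D = 1)
    (σ : Matrix (Fin u) (Fin v) ℂ) (hσ1 : σᴴ * σ = 1) (hσ2 : σ * σᴴ = 1)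
    (P : Matrix (Fin v) (Fin v) ℂ) (hP : IsMP (1 - σᴴ * A * σ) P)
    (P' : Matrix (Fin u) (Fin u) ℂ) (hP' : IsMP (1 - A) P') :
    D + (C * σ) * P * (σᴴ * B) = D + C * P' * B := by
  obtain ⟨h1, h2, h3, h4⟩ := hP'
  have hM : 1 - σᴴ * A * σ = σᴴ * (1 - A) * σ := by
    rw [Matrix.mul_sub, Matrix.mul_one, Matrix.sub_mul, hσ1]
  have hconj : ∀ (X : Matrix (Fin u) (Fin u) ℂ), X.IsHermitian → (σᴴ * X * σ).IsHermitian := by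
    intro X hX
    unfold Matrix.IsHermitian
    calc (σᴴ * X * σ)ᴴ = σᴴ * Xᴴ * σ := by
          rw [conjTranspose_mul, conjTranspose_mul, conjTranspose_conjTranspose,
            ← Matrix.mul_assoc]
      _ = σᴴ * X * σ := by rw [hX.eq]
  have key : IsMP (1 - σᴴ * A * σ) (σᴴ * P' * σ) := by
    rw [hM]
    refine ⟨?_, ?_, ?_, ?_⟩
    · calc σᴴ * (1 - A) * σ * (σᴴ * P' * σ) * (σᴴ * (1 - A) * σ)
          = σᴴ * ((1 - A) * (σ * σᴴ) * P' * (σ * σᴴ) * (1 - A)) * σ := by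
            simp only [Matrix.mul_assoc]
      _ = σᴴ * ((1 - A) * P' * (1 - A)) * σ := by simp [hσ2, Matrix.mul_assoc]
      _ = σᴴ * (1 - A) * σ := by rw [h1, Matrix.mul_assoc]
    · calc σᴴ * P' * σ * (σᴴ * (1 - A) * σ) * (σᴴ * P' * σ)
          = σᴴ * (P' * (σ * σᴴ) * (1 - A) * (σ * σᴴ) * P') * σ := by
            simp only [Matrix.mul_assoc]
      _ = σᴴ * (P' * (1 - A) * P') * σ := by simp [hσ2, Matrix.mul_assoc]
      _ = σᴴ * P' * σ := by rw [h2, Matrix.mul_assoc]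
    · have : σᴴ * (1 - A) * σ * (σᴴ * P' * σ) = σᴴ * ((1 - A) * P') * σ := by
        calc σᴴ * (1 - A) * σ * (σᴴ * P' * σ)
            = σᴴ * ((1 - A) * (σ * σᴴ) * P') * σ := by simp only [Matrix.mul_assoc]
        _ = σᴴ * ((1 - A) * P') * σ := by simp [hσ2, Matrix.mul_assoc]
      rw [this]
      exact hconj _ h3
    · have : σᴴ * P' * σ * (σᴴ * (1 - A) * σ) = σᴴ * (P' * (1 - A)) * σ := by
        calc σᴴ * P' * σ * (σᴴ * (1 - A) * σ)
            = σᴴ * (P' * (σ * σᴴ) * (1 - A)) * σ := by simp only [Matrix.mul_assoc]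
        _ = σᴴ * (P' * (1 - A)) * σ := by simp [hσ2, Matrix.mul_assoc]
      rw [this]
      exact hconj _ h4
  have hPeq : P = σᴴ * P' * σ := isMP_unique _ _ _ hP key
  rw [hPeq]
  congr 1
  calc C * σ * (σᴴ * P' * σ) * (σᴴ * B)
      = C * (σ * σᴴ) * P' * (σ * σᴴ) * B := by simp only [Matrix.mul_assoc]
  _ = C * P' * B := by simp [hσ2, Matrix.mul_assoc]
end

section
/- Kernel-image trace coincides with Schur-complement trace: let τ : U ⊕ K → U ⊕ L be an isometry with blocks [[A,B],[C,D]], and suppose k : K → U and j : U → L satisfy B = (I - A) ∘ k and C = j ∘ (I - A). Then D + C ∘ k = D + j ∘ B = D + C ∘ (I - A)⁺ ∘ B. -/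
open Matrix

/-- The kernel-image trace coincides with the Schur-complement trace. -/
theorem stmt17 {u k l : ℕ}
    (A : Matrix (Fin u) (Fin u) ℂ) (B : Matrix (Fin u) (Fin k) ℂ)
    (C : Matrix (Fin l) (Fin u) ℂ) (D : Matrix (Fin l) (Fin k) ℂ)
    (hiso : (fromBlocks A B C D)ᴴ * fromBlocks A B C D = 1)
    (K : Matrix (Fin u) (Fin k) ℂ) (hK : B = (1 - A) * K)
    (J : Matrix (Fin l) (Fin u) ℂ) (hJ : C = J * (1 - A))
    (P : Matrix (Fin u) (Fin u) ℂ) (hP : IsMP (1 - A) P) :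
    D + C * K = D + J * B ∧ D + C * K = D + C * P * B := by
  obtain ⟨h1, -, -, -⟩ := hP
  subst hK hJ
  constructor
  · rw [Matrix.mul_assoc]
  · have h2 : J * (1 - A) * P * ((1 - A) * K) = J * ((1 - A) * P * (1 - A)) * K := by
      simp only [Matrix.mul_assoc]
    rw [h2, h1, Matrix.mul_assoc]
end
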